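/- arXiv:2103.01659 — 2 statements merged into one kernel-verified Lean document; each statement's English description precedes it below -/
import Mathlib

section
/- Let (X,d) be a Bourbaki quasi-precompact metric space. Then every ward continuous function f : X → ℝ is uniformly continuous. -/
open Filter Metric Set

/-- A sequence is quasi-Cauchy if distances of consecutive terms tend to zero. -/
def QuasiCauchy {α : Type*} [MetricSpace α] (u : ℕ → α) : Prop :=
  ∀ ε > (0:ℝ), ∃ n₀ : ℕ, ∀ n ≥ n₀, dist (u (n+1)) (u n) < ε

/-- A function is ward continuous if it preserves quasi-Cauchy sequences. -/
def WardContinuous {α β : Type*} [MetricSpace α] [MetricSpace β] (f : α → β) : Prop :=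
  ∀ u : ℕ → α, QuasiCauchy u → QuasiCauchy (f ∘ u)

/-- `y` lies in the ε-chainable component of `x`: they are joined by an ε-chain. -/
def ChainConn {α : Type*} [MetricSpace α] (ε : ℝ) (x y : α) : Prop :=
  ∃ (n : ℕ) (p : ℕ → α), p 0 = x ∧ p n = y ∧ ∀ i < n, dist (p i) (p (i+1)) < ε

/-- A metric space is Bourbaki quasi-precompact: for every ε > 0 it is covered by
finitely many ε-chainable components. -/
def BourbakiQuasiPrecompact (α : Type*) [MetricSpace α] : Prop :=
  ∀ ε > (0:ℝ), ∃ s : Finset α, ∀ x : α, ∃ p ∈ s, ChainConn ε p x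

lemma chain_symm {α : Type*} [MetricSpace α] {ε : ℝ} {x y : α}
    (h : ChainConn ε x y) : ChainConn ε y x := by
  obtain ⟨n, p, h0, hn, hs⟩ := h
  refine ⟨n, fun i => p (n - i), by simp [hn], by simp [h0], fun i hi => ?_⟩
  show dist (p (n - i)) (p (n - (i+1))) < ε
  rw [dist_comm, show n - i = n - (i+1) + 1 by omega]
  exact hs _ (by omega)

lemma chain_trans {α : Type*} [MetricSpace α] {ε : ℝ} {x y z : α}
    (h1 : ChainConn ε x y) (h2 : ChainConn ε y z) : ChainConn ε x z := by
  obtain ⟨n, p, hp0, hpn, hps⟩ := h1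
  obtain ⟨m, q, hq0, hqm, hqs⟩ := h2
  refine ⟨n + m, fun i => if i < n then p i else q (i - n), ?_, ?_, fun i hi => ?_⟩
  · by_cases h : 0 < n
    · simp [h, hp0]
    · simp only [h, if_neg]
      have : n = 0 := by omega
      rw [this] at hpn ⊢; simp [hq0, ← hpn, hp0]
  · have : ¬ (n + m < n) := by omega
    simp [this, hqm]
  · rcases lt_trichotomy (i+1) n with h | h | h
    · simp only [if_pos h, if_pos (by omega : i < n)]
      exact hps i (by omega)
    · have hi' : i < n := by omega
      simp only [if_pos hi', if_neg (by omega : ¬ i + 1 < n)]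
      have e : i + 1 - n = 0 := by omega
      rw [e, hq0, ← hpn, ← h]
      exact hps i (by omega)
    · have hi' : ¬ i < n := by omega
      simp only [if_neg hi', if_neg (by omega : ¬ i + 1 < n)]
      have : i + 1 - n = (i - n) + 1 := by omega
      rw [this]
      exact hqs _ (by omega)

lemma pigeon {α : Type*} {S : Set ℕ} (hS : S.Infinite) (s : Finset α) (g : ℕ → α)
    (hg : ∀ n ∈ S, g n ∈ s) : ∃ p ∈ s, {n ∈ S | g n = p}.Infinite := by
  by_contra h
  push_neg at h
  have hfin : S.Finite := by
    have hsub : S ⊆ ⋃ p ∈ s, {n ∈ S | g n = p} := by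
      intro n hn
      exact Set.mem_biUnion (hg n hn) ⟨hn, rfl⟩
    exact Set.Finite.subset (Set.Finite.biUnion s.finite_toSet
      (fun p hp => h p hp)) hsub
  exact hS hfin

/-- block-walking state machine -/
def st (ℓ : ℕ → ℕ) : ℕ → ℕ × ℕ
  | 0 => (0, 0)
  | t+1 => let p := st ℓ t; if p.2 + 1 < ℓ p.1 then (p.1, p.2 + 1) else (p.1 + 1, 0)

lemma st_inv (ℓ : ℕ → ℕ) (hℓ : ∀ k, 0 < ℓ k) : ∀ t, (st ℓ t).2 < ℓ (st ℓ t).1 := by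
  intro t
  induction t with
  | zero => simpa [st] using hℓ 0
  | succ t ih =>
    rw [st]
    split
    · simpa using ‹_›
    · simpa using hℓ _

lemma st_fst_mono (ℓ : ℕ → ℕ) : Monotone (fun t => (st ℓ t).1) := by
  apply monotone_nat_of_le_succ
  intro t
  rw [st]
  split <;> simp

lemma st_fst_le (ℓ : ℕ → ℕ) : ∀ t, (st ℓ t).1 ≤ t := by
  intro t
  induction t with
  | zero => simp [st]
  | succ t ih => rw [st]; split <;> simp <;> omega

lemma st_reach (ℓ : ℕ → ℕ) (hℓ : ∀ k, 0 < ℓ k) : ∀ k, ∃ t, st ℓ t = (k, 0) := by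
  intro k
  induction k with
  | zero => exact ⟨0, rfl⟩
  | succ k ih =>
    obtain ⟨t, ht⟩ := ih
    have hrun : ∀ j, j < ℓ k → st ℓ (t + j) = (k, j) := by
      intro j
      induction j with
      | zero => intro _; simpa using ht
      | succ j ihj =>
        intro hj
        have : st ℓ (t + j) = (k, j) := ihj (by omega)
        show st ℓ (t + j + 1) = _
        rw [st, this]
        simp [hj]
    refine ⟨t + ℓ k, ?_⟩
    have h1 : st ℓ (t + (ℓ k - 1)) = (k, ℓ k - 1) := hrun _ (by have := hℓ k; omega)
    have h2 : t + ℓ k = (t + (ℓ k - 1)) + 1 := by have := hℓ k; omega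
    rw [h2, st, h1]
    simp
    omega

lemma st_step (ℓ : ℕ → ℕ) (hℓ : ∀ k, 0 < ℓ k) (t : ℕ) :
    ((st ℓ (t+1)).1 = (st ℓ t).1 ∧ (st ℓ (t+1)).2 = (st ℓ t).2 + 1 ∧ (st ℓ t).2 + 1 < ℓ (st ℓ t).1)
    ∨ ((st ℓ t).2 = ℓ (st ℓ t).1 - 1 ∧ st ℓ (t+1) = ((st ℓ t).1 + 1, 0)) := by
  have hinv := st_inv ℓ hℓ t
  rw [st]
  split
  · left; exact ⟨rfl, rfl, ‹_›⟩
  · right; exact ⟨by omega, rfl⟩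

def iterSets (S0 : Set ℕ) (g : ℕ → Set ℕ → Set ℕ) : ℕ → Set ℕ
  | 0 => S0
  | k+1 => g k (iterSets S0 g k)

lemma chain_step {X : Type*} [MetricSpace X] (hX : BourbakiQuasiPrecompact X)
    (a : ℕ → X) (ε : ℝ) (hε : 0 < ε) (S : Set ℕ) (hS : S.Infinite) :
    ∃ T, T ⊆ S ∧ T.Infinite ∧ ∀ m ∈ T, ∀ n ∈ T, ChainConn ε (a m) (a n) := by
  obtain ⟨s, hs⟩ := hX ε hε
  choose c hc1 hc2 using hs
  obtain ⟨pt, _, hinf⟩ := pigeon hS s (fun n => c (a n)) (fun n _ => hc1 _)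
  refine ⟨{n ∈ S | c (a n) = pt}, fun n hn => hn.1, hinf, fun mm hm nn hn => ?_⟩
  have h1 : ChainConn ε pt (a mm) := by rw [← hm.2]; exact hc2 (a mm)
  have h2 : ChainConn ε pt (a nn) := by rw [← hn.2]; exact hc2 (a nn)
  exact chain_trans (chain_symm h1) h2

theorem stmt9 {X : Type*} [MetricSpace X] (hX : BourbakiQuasiPrecompact X)
    (f : X → ℝ) (hf : WardContinuous f) : UniformContinuous f := by
  rw [Metric.uniformContinuous_iff]
  by_contra h
  push_neg at h
  obtain ⟨ε₀, hε₀, hbad⟩ := h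
  have hpair : ∀ k : ℕ, ∃ x y : X, dist x y < 1/((k:ℝ)+1) ∧ ε₀ ≤ dist (f x) (f y) := by
    intro k
    obtain ⟨x, y, hxy, hfxy⟩ := hbad (1/((k:ℝ)+1)) (by positivity)
    exact ⟨x, y, hxy, hfxy⟩
  choose a b hab hfab using hpair
  -- nested infinite index sets
  have hstep : ∀ (k : ℕ) (S : Set ℕ), ∃ T, S.Infinite →
      (T ⊆ S ∧ T.Infinite ∧ ∀ m ∈ T, ∀ n ∈ T, ChainConn (1/((k:ℝ)+1)) (a m) (a n)) := by
    intro k S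
    by_cases hS : S.Infinite
    · obtain ⟨T, hT⟩ := chain_step hX a (1/((k:ℝ)+1)) (by positivity) S hS
      exact ⟨T, fun _ => hT⟩
    · exact ⟨∅, fun h' => absurd h' hS⟩
  choose g hg using hstep
  set A : ℕ → Set ℕ := iterSets Set.univ g with hA
  have hAinf : ∀ k, (A k).Infinite := by
    intro k
    induction k with
    | zero => exact Set.infinite_univ
    | succ k ih => exact (hg k (A k) ih).2.1
  have hAsub : ∀ k, A (k+1) ⊆ A k := fun k => (hg k (A k) (hAinf k)).1
  have hAchain : ∀ k, ∀ m ∈ A (k+1), ∀ n ∈ A (k+1), ChainConn (1/((k:ℝ)+1)) (a m) (a n) :=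
    fun k => (hg k (A k) (hAinf k)).2.2
  -- increasing selection ν k ∈ A k
  have hnext : ∀ (k n : ℕ), ∃ m, m ∈ A k ∧ n < m := by
    intro k n
    obtain ⟨m, hm1, hm2⟩ := (hAinf k).exists_gt n
    exact ⟨m, hm1, hm2⟩
  choose nxt hnxt1 hnxt2 using hnext
  set ν : ℕ → ℕ := fun k => Nat.rec (nxt 0 0) (fun k ih => nxt (k+1) ih) k with hν
  have hνs : ∀ k, ν (k+1) = nxt (k+1) (ν k) := fun k => rfl
  have hνA : ∀ k, ν k ∈ A k := by
    intro k
    cases k with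
    | zero => exact hnxt1 0 0
    | succ k => rw [hνs]; exact hnxt1 _ _
  have hνlt : ∀ k, ν k < ν (k+1) := fun k => by rw [hνs]; exact hnxt2 _ _
  set μ : ℕ → ℕ := fun k => ν (k+1) with hμ
  have hμge : ∀ k, k + 1 ≤ μ k := by
    intro k
    induction k with
    | zero =>
      have h' := hνlt 0
      change ν 0 < ν 1 at h'
      change 1 ≤ ν 1
      omega
    | succ k ih =>
      have h' := hνlt (k+1)
      change ν (k+1) < ν (k+2) at h'
      change k + 1 ≤ ν (k+1) at ih
      change k + 2 ≤ ν (k+2)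
      omega
  have hchain : ∀ k : ℕ, ChainConn (1/((k:ℝ)+1)) (a (μ k)) (a (μ (k+1))) := by
    intro k
    exact hAchain k _ (hνA (k+1)) _ (hAsub (k+1) (hνA (k+2)))
  choose m p hp0 hpm hps using hchain
  set ℓ : ℕ → ℕ := fun k => m k + 2 with hℓ
  have hℓpos : ∀ k, 0 < ℓ k := fun k => Nat.succ_pos _
  set q : ℕ → ℕ → X := fun k i => if i = 0 then b (μ k) else p k (i - 1) with hq
  set u : ℕ → X := fun t => q (st ℓ t).1 (st ℓ t).2 with hu
  have hsmall : ∀ k, (1:ℝ)/((μ k : ℝ)+1) ≤ 1/((k:ℝ)+1) := by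
    intro k
    apply one_div_le_one_div_of_le (by positivity)
    have : (k:ℝ) + 1 ≤ (μ k : ℝ) := by exact_mod_cast hμge k
    linarith
  -- within-block steps
  have hblock : ∀ k i, i + 1 < ℓ k → dist (q k i) (q k (i+1)) < 1/((k:ℝ)+1) := by
    intro k i hi
    have hiℓ : i + 1 < m k + 2 := hi
    by_cases h0 : i = 0
    · subst h0
      have e1 : q k 0 = b (μ k) := by simp [hq]
      have e2 : q k 1 = p k 0 := by simp [hq]
      rw [e1, e2, hp0, dist_comm]
      exact lt_of_lt_of_le (hab (μ k)) (hsmall k)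
    · have e1 : q k i = p k (i-1) := by simp [hq, h0]
      have e2 : q k (i+1) = p k i := by simp [hq]
      rw [e1, e2]
      have hs := hps k (i-1) (by omega)
      rw [show i - 1 + 1 = i by omega] at hs
      exact hs
  -- cross-block step
  have hcross : ∀ k, dist (q k (ℓ k - 1)) (q (k+1) 0) < 1/((k:ℝ)+1) := by
    intro k
    have e1 : q k (ℓ k - 1) = p k (m k) := by
      have : ℓ k - 1 = m k + 1 := by simp [hℓ]
      rw [this]; simp [hq]
    have e2 : q (k+1) 0 = b (μ (k+1)) := by simp [hq]
    rw [e1, e2, hpm]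
    refine lt_of_lt_of_le (hab (μ (k+1))) (le_trans (hsmall (k+1)) ?_)
    apply one_div_le_one_div_of_le (by positivity)
    push_cast; linarith
  -- u is quasi-Cauchy
  have huqc : QuasiCauchy u := by
    intro ε hε
    obtain ⟨K, hK⟩ := exists_nat_one_div_lt hε
    obtain ⟨T, hT⟩ := st_reach ℓ hℓpos K
    refine ⟨T, fun t ht => ?_⟩
    have hfst : K ≤ (st ℓ t).1 := by
      have h' := st_fst_mono ℓ ht
      simp only [hT] at h'
      exact h'
    have hmono1 : (1:ℝ)/(((st ℓ t).1 : ℝ)+1) ≤ 1/((K:ℝ)+1) := by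
      apply one_div_le_one_div_of_le (by positivity)
      have : (K:ℝ) ≤ ((st ℓ t).1 : ℝ) := by exact_mod_cast hfst
      linarith
    have key : dist (u t) (u (t+1)) < 1/(((st ℓ t).1 : ℝ)+1) := by
      rcases st_step ℓ hℓpos t with ⟨h1, h2, h3⟩ | ⟨h1, h2⟩
      · show dist (q (st ℓ t).1 (st ℓ t).2) (q (st ℓ (t+1)).1 (st ℓ (t+1)).2) < _
        rw [h1, h2]
        exact hblock _ _ h3
      · show dist (q (st ℓ t).1 (st ℓ t).2) (q (st ℓ (t+1)).1 (st ℓ (t+1)).2) < _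
        rw [h2, h1]
        have := hcross (st ℓ t).1
        simpa using this
    rw [dist_comm] at key
    calc dist (u (t+1)) (u t) < 1/(((st ℓ t).1 : ℝ)+1) := key
      _ ≤ 1/((K:ℝ)+1) := hmono1
      _ < ε := hK
  -- image not quasi-Cauchy: contradiction
  obtain ⟨n₀, hn₀⟩ := hf u huqc ε₀ hε₀
  obtain ⟨T, hT⟩ := st_reach ℓ hℓpos n₀
  have hTge : n₀ ≤ T := by
    have h' := st_fst_le ℓ T
    rw [hT] at h'
    exact h'
  have h1 : u T = b (μ n₀) := by
    show q (st ℓ T).1 (st ℓ T).2 = _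
    rw [hT]
    simp [hq]
  have h2 : u (T+1) = a (μ n₀) := by
    have hst : st ℓ (T+1) = (n₀, 1) := by
      rw [st, hT]
      have : 0 + 1 < ℓ n₀ := by simp [hℓ]
      simp [this]
    show q (st ℓ (T+1)).1 (st ℓ (T+1)).2 = _
    rw [hst]
    have : q n₀ 1 = p n₀ 0 := by simp [hq]
    rw [this, hp0]
  have hc := hn₀ T hTge
  simp only [Function.comp] at hc
  rw [h1, h2] at hc
  have := hfab (μ n₀)
  linarith
end

section
/- A metric space (X,d) is Bourbaki quasi-precompact if and only if both of the following hold: every ward continuous function f : X → ℝ is uniformly continuous, and for every ε > 0 the set {x ∈ X : I(x) > ε} is finite. -/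
open Filter Metric Set

/-- The degree of isolation `I(x) = d(x, X \ {x})` of a point. -/
noncomputable def degIsol {α : Type*} [MetricSpace α] (x : α) : ℝ :=
  Metric.infDist x ({x}ᶜ : Set α)

section Aux
variable {X : Type*} [MetricSpace X]

lemma chainConn_refl (ε : ℝ) (x : X) : ChainConn ε x x :=
  ⟨0, fun _ => x, rfl, rfl, by simp⟩

lemma chainConn_of_dist {ε : ℝ} {x y : X} (h : dist x y < ε) : ChainConn ε x y := by
  refine ⟨1, fun i => if i = 0 then x else y, by simp, by simp, ?_⟩
  intro i hi
  interval_cases i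
  simpa using h

lemma chainConn_symm {ε : ℝ} {x y : X} (h : ChainConn ε x y) : ChainConn ε y x := by
  obtain ⟨n, p, hp0, hpn, hp⟩ := h
  refine ⟨n, fun i => p (n - i), by simp [hpn], by simp [hp0], ?_⟩
  intro i hi
  have h1 : n - (i+1) < n := by omega
  have h2 : n - (i+1) + 1 = n - i := by omega
  have := hp (n - (i+1)) h1
  rw [h2] at this
  rw [dist_comm]
  exact this

lemma chainConn_trans {ε : ℝ} {x y z : X} (h1 : ChainConn ε x y) (h2 : ChainConn ε y z) :
    ChainConn ε x z := by
  obtain ⟨n, p, hp0, hpn, hp⟩ := h1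
  obtain ⟨m, q, hq0, hqm, hq⟩ := h2
  refine ⟨n + m, fun i => if i ≤ n then p i else q (i - n), by simp [hp0], ?_, ?_⟩
  · by_cases hm : m = 0
    · subst hm
      simp only [Nat.add_zero, if_pos (le_refl n), hpn]
      rw [← hq0]; exact hqm
    · have hn : ¬ (n + m ≤ n) := by omega
      simp only [if_neg hn, Nat.add_sub_cancel_left]
      exact hqm
  · intro i hi
    by_cases h1 : i + 1 ≤ n
    · have hle : i ≤ n := by omega
      simp only [if_pos hle, if_pos h1]
      exact hp i (by omega)
    · by_cases h2 : i ≤ n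
      · have hin : i = n := by omega
        have hm : 0 < m := by omega
        simp only [if_pos h2, if_neg h1]
        subst hin
        have he : i + 1 - i = 1 := by omega
        rw [he, hpn, ← hq0]
        exact hq 0 hm
      · simp only [if_neg h2, if_neg h1]
        have he : i + 1 - n = (i - n) + 1 := by omega
        rw [he]
        exact hq (i - n) (by omega)

/-- If from index `n₀` on all consecutive distances are `< ε`, then `u n₀` is ε-chain
connected to every later term. -/
lemma chainConn_of_tail {ε : ℝ} {u : ℕ → X} {n₀ : ℕ}
    (h : ∀ n ≥ n₀, dist (u (n+1)) (u n) < ε) :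
    ∀ n ≥ n₀, ChainConn ε (u n₀) (u n) := by
  intro n hn
  induction n, hn using Nat.le_induction with
  | base => exact chainConn_refl ε _
  | succ n hn ih =>
      exact chainConn_trans ih (chainConn_of_dist (by rw [dist_comm]; exact h n hn))

/-- A chain ending at a point that has no distinct points within `ε` must start there. -/
lemma chainConn_eq_of_isol {ε : ℝ} {x p : X} (hI : ∀ z : X, dist x z < ε → z = x)
    (h : ChainConn ε p x) : p = x := by
  obtain ⟨n, q, hq0, hqn, hq⟩ := chainConn_symm h
  have key : ∀ i ≤ n, q i = x := by
    intro i hi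
    induction i with
    | zero => exact hq0
    | succ i ih =>
        have hqi : q i = x := ih (by omega)
        have := hq i (by omega)
        rw [hqi] at this
        exact hI _ this
  rw [← hqn]; exact key n le_rfl

lemma eq_of_lt_degIsol {ε : ℝ} {x z : X} (hI : ε < degIsol x) (hd : dist x z < ε) : z = x := by
  by_contra hne
  have : Metric.infDist x ({x}ᶜ : Set X) ≤ dist x z :=
    Metric.infDist_le_dist_of_mem (by simpa using hne)
  have : degIsol x ≤ dist x z := this
  linarith

end Aux

section Part2
variable {X : Type*} [MetricSpace X]

lemma finite_isol_of_bqp (hB : BourbakiQuasiPrecompact X) {ε : ℝ} (hε : 0 < ε) :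
    {x : X | ε < degIsol x}.Finite := by
  obtain ⟨s, hs⟩ := hB ε hε
  apply Set.Finite.subset s.finite_toSet
  intro x hx
  obtain ⟨p, hp, hc⟩ := hs x
  have hpx : p = x :=
    chainConn_eq_of_isol (fun z hz => eq_of_lt_degIsol hx hz) hc
  rw [← hpx]
  exact hp

lemma bqp_of_conditions
    (h1 : ∀ f : X → ℝ, WardContinuous f → UniformContinuous f)
    (h2 : ∀ ε > (0:ℝ), {x : X | ε < degIsol x}.Finite) :
    BourbakiQuasiPrecompact X := by
  classical
  by_contra hnB
  unfold BourbakiQuasiPrecompact at hnB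
  push_neg at hnB
  obtain ⟨ε₀, hε₀, hcov⟩ := hnB
  choose pt hpt using hcov
  -- a sequence of pairwise non-chain-connected points
  set T : ℕ → Finset X := fun n => Nat.rec ∅ (fun _ s => insert (pt s) s) n with hT
  set x : ℕ → X := fun n => pt (T n) with hx
  have hTsucc : ∀ n, T (n+1) = insert (x n) (T n) := fun n => rfl
  have hTmono : Monotone T := monotone_nat_of_le_succ (fun n => by
    rw [hTsucc]; exact Finset.subset_insert _ _)
  have hxmem : ∀ n, x n ∈ T (n+1) := fun n => by
    rw [hTsucc]; exact Finset.mem_insert_self _ _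
  have hnc' : ∀ i j, i < j → ¬ ChainConn ε₀ (x i) (x j) := by
    intro i j hij
    exact hpt (T j) (x i) (hTmono hij (hxmem i))
  have hnc : ∀ i j, i ≠ j → ¬ ChainConn ε₀ (x i) (x j) := by
    intro i j hij hc
    rcases lt_or_gt_of_ne hij with h | h
    · exact hnc' i j h hc
    · exact hnc' j i h (chainConn_symm hc)
  have hinj : Function.Injective x := by
    intro i j hij
    by_contra hne
    exact hnc i j hne (hij ▸ chainConn_refl ε₀ (x i))
  -- choose a subsequence with small degree of isolation
  set δ : ℕ → ℝ := fun k => min ε₀ (1/(k+1)) / 2 with hδ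
  have hδpos : ∀ k, 0 < δ k := by
    intro k
    have : (0:ℝ) < 1/(k+1) := by positivity
    simp only [hδ]
    have := lt_min hε₀ this
    linarith
  have hδε₀ : ∀ k, δ k < ε₀ := by
    intro k
    have h1 : δ k ≤ ε₀ / 2 := by
      simp only [hδ]
      have := min_le_left ε₀ (1/(k+1):ℝ)
      linarith
    linarith
  have hδk : ∀ k, δ k ≤ 1/(k+1) / 2 := by
    intro k
    simp only [hδ]
    have := min_le_right ε₀ (1/(k+1):ℝ)
    linarith
  have hstep : ∀ k b : ℕ, ∃ n, b < n ∧ degIsol (x n) < δ k := by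
    intro k b
    have hfin : {n : ℕ | ¬ degIsol (x n) < δ k}.Finite := by
      have hsub : {n : ℕ | ¬ degIsol (x n) < δ k} ⊆ x ⁻¹' {p : X | δ k / 2 < degIsol p} := by
        intro n hn
        simp only [Set.mem_setOf_eq, not_lt] at hn
        have := hδpos k
        simp only [Set.mem_preimage, Set.mem_setOf_eq]
        linarith
      exact (Set.Finite.preimage (hinj.injOn) (h2 (δ k / 2) (by linarith [hδpos k]))).subset hsub
    obtain ⟨n, hn⟩ := ((Set.Ioi_infinite b).diff hfin).nonempty
    refine ⟨n, hn.1, ?_⟩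
    have := hn.2
    simp only [Set.mem_setOf_eq, not_not] at this
    exact this
  choose g hg1 hg2 using hstep
  set m : ℕ → ℕ := fun k => Nat.rec (g 0 0) (fun k mk => g (k+1) mk) k with hm
  have hmsucc : ∀ k, m (k+1) = g (k+1) (m k) := fun k => rfl
  have hmlt : ∀ k, m k < m (k+1) := fun k => by rw [hmsucc]; exact hg1 (k+1) (m k)
  have hmmono : StrictMono m := strictMono_nat_of_lt_succ hmlt
  have hIm : ∀ k, degIsol (x (m k)) < δ k := by
    intro k
    cases k with
    | zero => exact hg2 0 0
    | succ k => rw [hmsucc]; exact hg2 (k+1) (m k)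
  set Xc : ℕ → X := fun k => x (m k) with hXc
  have hXcnc : ∀ k k', k ≠ k' → ¬ ChainConn ε₀ (Xc k) (Xc k') := by
    intro k k' hkk'
    exact hnc (m k) (m k') (fun h => hkk' (hmmono.injective h))
  -- pick close companion points
  have hy : ∀ k, ∃ y : X, y ≠ Xc k ∧ dist (Xc k) y < δ k := by
    intro k
    have hne : ({Xc k}ᶜ : Set X).Nonempty := by
      refine ⟨x (m k + 1), ?_⟩
      simp only [Set.mem_compl_iff, Set.mem_singleton_iff, hXc]
      intro h
      refine hnc (m k + 1) (m k) (by omega) ?_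
      rw [h]
      exact chainConn_refl ε₀ _
    have := (Metric.infDist_lt_iff hne).mp (lt_of_le_of_lt (le_refl _) (hIm k))
    obtain ⟨y, hy1, hy2⟩ := this
    exact ⟨y, by simpa using hy1, hy2⟩
  choose y hy1 hy2 using hy
  set r : ℕ → ℝ := fun k => dist (Xc k) (y k) with hr
  have hr0 : ∀ k, 0 < r k := fun k => dist_pos.mpr (fun h => hy1 k h.symm)
  have hrδ : ∀ k, r k < δ k := hy2
  have hrε : ∀ k, r k < ε₀ := fun k => lt_trans (hrδ k) (hδε₀ k)
  -- the bump function
  set bump : ℕ → X → ℝ := fun k p => max (1 - dist p (Xc k) / r k) 0 with hbump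
  have hbump_far : ∀ k p, r k ≤ dist p (Xc k) → bump k p = 0 := by
    intro k p hd
    have h1 : (1:ℝ) ≤ dist p (Xc k) / r k := (one_le_div (hr0 k)).mpr hd
    simp only [hbump]
    exact max_eq_right (by linarith)
  have hbump_near : ∀ k p, bump k p ≠ 0 → dist p (Xc k) < r k := by
    intro k p h
    by_contra hcon
    exact h (hbump_far k p (not_lt.mp hcon))
  have hbump_chain : ∀ k p, bump k p ≠ 0 → ChainConn ε₀ (Xc k) p := by
    intro k p h
    refine chainConn_of_dist ?_
    rw [dist_comm]
    exact lt_trans (hbump_near k p h) (hrε k)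
  have hsep : ∀ k k' p, k ≠ k' → bump k p ≠ 0 → bump k' p = 0 := by
    intro k k' p hkk' hk
    by_contra hk'
    exact hXcnc k k' hkk'
      (chainConn_trans (hbump_chain k p hk) (chainConn_symm (hbump_chain k' p hk')))
  set f : X → ℝ := fun p => ∑' k, bump k p with hf
  have hfeval : ∀ p k, (∀ k', k' ≠ k → bump k' p = 0) → f p = bump k p := by
    intro p k h
    simp only [hf]
    exact tsum_eq_single k h
  have hfXc : ∀ k, f (Xc k) = 1 := by
    intro k
    have h1 : bump k (Xc k) = 1 := by simp [hbump]
    rw [hfeval (Xc k) k (fun k' hk' => hsep k k' (Xc k) (Ne.symm hk') (by rw [h1]; norm_num)), h1]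
  have hfy : ∀ k, f (y k) = 0 := by
    intro k
    have hall : ∀ k', bump k' (y k) = 0 := by
      intro k'
      by_cases hkk' : k' = k
      · subst hkk'
        exact hbump_far k' (y k') (by rw [dist_comm])
      · by_contra hcon
        refine hXcnc k' k hkk' ?_
        refine chainConn_trans (hbump_chain k' (y k) hcon) ?_
        refine chainConn_of_dist ?_
        rw [dist_comm]
        exact lt_trans (hrδ k) (hδε₀ k)
    simp only [hf]
    rw [show (fun k' => bump k' (y k)) = fun _ => (0:ℝ) from funext hall]
    exact tsum_zero
  -- f is ward continuous
  have hward : WardContinuous f := by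
    intro u hu
    obtain ⟨n₀, hn₀⟩ := hu ε₀ hε₀
    have htail : ∀ n ≥ n₀, ChainConn ε₀ (u n₀) (u n) := chainConn_of_tail hn₀
    by_cases hex : ∃ k, ChainConn ε₀ (Xc k) (u n₀)
    · obtain ⟨k, hk⟩ := hex
      have hval : ∀ n ≥ n₀, f (u n) = bump k (u n) := by
        intro n hn
        refine hfeval (u n) k ?_
        intro k' hk'
        by_contra hcon
        refine hXcnc k' k hk' ?_
        exact chainConn_trans (hbump_chain k' (u n) hcon)
          (chainConn_trans (chainConn_symm (htail n hn)) (chainConn_symm hk))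
      intro ε hε
      obtain ⟨n₁, hn₁⟩ := hu (ε * r k) (mul_pos hε (hr0 k))
      refine ⟨max n₀ n₁, ?_⟩
      intro n hn
      have hn0 : n₀ ≤ n := le_trans (le_max_left _ _) hn
      have hn1 : n₁ ≤ n := le_trans (le_max_right _ _) hn
      simp only [Function.comp_apply]
      rw [hval (n+1) (by omega), hval n hn0, Real.dist_eq]
      have h1 : |bump k (u (n+1)) - bump k (u n)| ≤
          |(1 - dist (u (n+1)) (Xc k) / r k) - (1 - dist (u n) (Xc k) / r k)| := by
        simp only [hbump]
        exact abs_max_sub_max_le_abs _ _ 0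
      have h2 : (1 - dist (u (n+1)) (Xc k) / r k) - (1 - dist (u n) (Xc k) / r k)
          = (dist (u n) (Xc k) - dist (u (n+1)) (Xc k)) / r k := by ring
      rw [h2] at h1
      have h3 : |(dist (u n) (Xc k) - dist (u (n+1)) (Xc k)) / r k|
          = |dist (u n) (Xc k) - dist (u (n+1)) (Xc k)| / r k := by
        rw [abs_div, abs_of_pos (hr0 k)]
      have h4 : |dist (u n) (Xc k) - dist (u (n+1)) (Xc k)| ≤ dist (u n) (u (n+1)) :=
        abs_dist_sub_le _ _ _
      have h5 : dist (u n) (u (n+1)) < ε * r k := by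
        rw [dist_comm]; exact hn₁ n hn1
      calc |bump k (u (n+1)) - bump k (u n)|
          ≤ |dist (u n) (Xc k) - dist (u (n+1)) (Xc k)| / r k := by rw [← h3]; exact h1
        _ ≤ dist (u n) (u (n+1)) / r k := by
            exact div_le_div_of_nonneg_right h4 (hr0 k).le
        _ < ε := by
            rw [div_lt_iff₀ (hr0 k)]
            linarith
    · have hval : ∀ n ≥ n₀, f (u n) = 0 := by
        intro n hn
        have hall : ∀ k, bump k (u n) = 0 := by
          intro k
          by_contra hcon
          exact hex ⟨k, chainConn_trans (hbump_chain k (u n) hcon)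
            (chainConn_symm (htail n hn))⟩
        simp only [hf]
        rw [show (fun k => bump k (u n)) = fun _ => (0:ℝ) from funext hall]
        exact tsum_zero
      intro ε hε
      refine ⟨n₀, ?_⟩
      intro n hn
      simp only [Function.comp_apply]
      rw [hval (n+1) (by omega), hval n hn]
      simpa using hε
  -- but f is not uniformly continuous
  have hUC := h1 f hward
  obtain ⟨d, hd, hH⟩ := Metric.uniformContinuous_iff.mp hUC 1 one_pos
  obtain ⟨k, hk⟩ := exists_nat_one_div_lt hd
  have hdk : dist (Xc k) (y k) < d := by
    have h1 : r k < δ k := hrδ k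
    have h2 : δ k ≤ 1/(k+1)/2 := hδk k
    have h3 : (0:ℝ) < 1/(k+1) := by positivity
    have : r k < d := by
      have : (1:ℝ)/(k+1)/2 < 1/(k+1) := by linarith
      linarith [hk]
    exact this
  have := hH hdk
  rw [hfXc k, hfy k, Real.dist_eq] at this
  norm_num at this

end Part2

section Part4
variable {X : Type*} [MetricSpace X]

lemma uc_of_bqp (hB : BourbakiQuasiPrecompact X) (f : X → ℝ) (hf : WardContinuous f) :
    UniformContinuous f := by
  classical
  by_contra hUC
  have hex : ∃ ε₀ > (0:ℝ), ∀ d > (0:ℝ), ∃ a b : X, dist a b < d ∧ ε₀ ≤ dist (f a) (f b) := by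
    by_contra h
    push_neg at h
    apply hUC
    rw [Metric.uniformContinuous_iff]
    intro ε hε
    obtain ⟨d, hd, H⟩ := h ε hε
    refine ⟨d, hd, ?_⟩
    intro p q hpq
    have := H p q hpq
    linarith
  obtain ⟨ε₀, hε₀, hpair⟩ := hex
  have hpair' : ∀ k : ℕ, ∃ a b : X, dist a b < 1/(k+1) ∧ ε₀ ≤ dist (f a) (f b) := by
    intro k
    exact hpair (1/(k+1)) (by positivity)
  choose a b hab hfab using hpair'
  -- pigeonhole: pass to an infinite set of indices in a single chain component
  have pigeon : ∀ (ε : ℝ), 0 < ε → ∀ S : Set ℕ, S.Infinite →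
      ∃ T, T ⊆ S ∧ T.Infinite ∧ ∀ k ∈ T, ∀ l ∈ T, ChainConn ε (a k) (a l) := by
    intro ε hε S hS
    obtain ⟨s, hs⟩ := hB ε hε
    have hone : ∃ p ∈ s, {k ∈ S | ChainConn ε p (a k)}.Infinite := by
      by_contra hfin
      push_neg at hfin
      have hsub : S ⊆ ⋃ p ∈ (s : Finset X), {k ∈ S | ChainConn ε p (a k)} := by
        intro k hk
        obtain ⟨p, hp, hc⟩ := hs (a k)
        exact Set.mem_biUnion hp ⟨hk, hc⟩
      have hfin2 : (⋃ p ∈ (s : Finset X), {k ∈ S | ChainConn ε p (a k)}).Finite :=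
        Set.Finite.biUnion s.finite_toSet (fun p hp => (hfin p hp))
      exact hS (hfin2.subset hsub)
    obtain ⟨p, hp, hT⟩ := hone
    exact ⟨_, fun k hk => hk.1, hT,
      fun k hk l hl => chainConn_trans (chainConn_symm hk.2) hl.2⟩
  have step : ∀ (j : ℕ) (S : Set ℕ), S.Infinite →
      ∃ T, T ⊆ S ∧ T.Infinite ∧ ∀ k ∈ T, ∀ l ∈ T, ChainConn (1/(j+1)) (a k) (a l) :=
    fun j S hS => pigeon (1/(j+1)) (by positivity) S hS
  choose! F hF1 hF2 hF3 using step
  set S : ℕ → Set ℕ := fun j => Nat.rec (F 0 Set.univ) (fun j Sj => F (j+1) Sj) j with hSdef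
  have hSsucc : ∀ j, S (j+1) = F (j+1) (S j) := fun j => rfl
  have hSinf : ∀ j, (S j).Infinite := by
    intro j
    induction j with
    | zero => exact hF2 0 _ Set.infinite_univ
    | succ j ih => rw [hSsucc]; exact hF2 _ _ ih
  have hSsub : ∀ j, S (j+1) ⊆ S j := fun j => by rw [hSsucc]; exact hF1 _ _ (hSinf j)
  have hSconn : ∀ j, ∀ k ∈ S j, ∀ l ∈ S j, ChainConn (1/(j+1)) (a k) (a l) := by
    intro j
    cases j with
    | zero => exact hF3 0 _ Set.infinite_univ
    | succ j => rw [hSsucc]; exact hF3 (j+1) (S j) (hSinf j)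
  -- a strictly increasing sequence of indices, K j ∈ S j
  have pick : ∀ (j c : ℕ), ∃ n, n ∈ S j ∧ c < n := by
    intro j c
    obtain ⟨n, hn, hc⟩ := (hSinf j).exists_gt c
    exact ⟨n, hn, hc⟩
  choose g hg1 hg2 using pick
  set K : ℕ → ℕ := fun j => Nat.rec (g 0 0) (fun j kj => g (j+1) kj) j with hKdef
  have hKsucc : ∀ j, K (j+1) = g (j+1) (K j) := fun j => rfl
  have hKmem : ∀ j, K j ∈ S j := by
    intro j
    cases j with
    | zero => exact hg1 0 0
    | succ j => rw [hKsucc]; exact hg1 (j+1) (K j)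
  have hKlt : ∀ j, K j < K (j+1) := fun j => by rw [hKsucc]; exact hg2 (j+1) (K j)
  have hKj : ∀ j, j ≤ K j := by
    intro j
    induction j with
    | zero => omega
    | succ j ih => have := hKlt j; omega
  -- chains between consecutive chosen points
  have hchain : ∀ j : ℕ, ChainConn (1/(j+1)) (a (K j)) (a (K (j+1))) :=
    fun j => hSconn j _ (hKmem j) _ (hSsub j (hKmem (j+1)))
  choose n p hp0 hpn hpstep using hchain
  -- blocks
  set L : ℕ → ℕ := fun j => n j + 2 with hLdef
  set B : ℕ → ℕ → X := fun j i => if i = 0 then a (K j) else if i = 1 then b (K j)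
    else p j (i - 2) with hBdef
  set o : ℕ → ℕ := fun j => ∑ i ∈ Finset.range j, L i with hodef
  have ho0 : o 0 = 0 := rfl
  have hosucc : ∀ j, o (j+1) = o j + L j := fun j => Finset.sum_range_succ L j
  have hL2 : ∀ j, 2 ≤ L j := fun j => by simp [hLdef]
  have homono : Monotone o := monotone_nat_of_le_succ (fun j => by rw [hosucc]; omega)
  have hoj : ∀ j, j ≤ o j := by
    intro j
    induction j with
    | zero => omega
    | succ j ih => rw [hosucc]; have := hL2 j; omega
  have hB0 : ∀ j, B j 0 = a (K j) := fun j => by simp [hBdef]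
  have hB1 : ∀ j, B j 1 = b (K j) := fun j => by simp [hBdef]
  have hBL : ∀ j, B j (L j) = a (K (j+1)) := by
    intro j
    have h1 : L j = n j + 2 := rfl
    simp only [hBdef, h1]
    rw [if_neg (by omega), if_neg (by omega)]
    simpa using hpn j
  -- one-step distances within a block
  have hKdist : ∀ j, dist (a (K j)) (b (K j)) < 1/(j+1) := by
    intro j
    refine lt_of_lt_of_le (hab (K j)) ?_
    apply one_div_le_one_div_of_le (by positivity)
    have hc : (j:ℝ) ≤ (K j : ℝ) := Nat.cast_le.mpr (hKj j)
    linarith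
  have hBstep : ∀ j i, i < L j → dist (B j (i+1)) (B j i) < 1/(j+1) := by
    intro j i hi
    match i with
    | 0 =>
        rw [hB0, hB1, dist_comm]
        exact hKdist j
    | 1 =>
        have hB2 : B j 2 = a (K j) := by
          simp only [hBdef]
          rw [if_neg (by omega), if_neg (by omega)]
          simpa using hp0 j
        rw [hB1, hB2]
        exact hKdist j
    | (i+2) =>
        have hin : i < n j := by
          have := hi
          simp only [hLdef] at this
          omega
        have e1 : B j (i+2) = p j i := by
          simp only [hBdef]
          rw [if_neg (by omega), if_neg (by omega)]
          congr 1
        have e2 : B j (i+3) = p j (i+1) := by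
          simp only [hBdef]
          rw [if_neg (by omega), if_neg (by omega)]
          congr 1
        rw [show i+2+1 = i+3 from rfl, e1, e2, dist_comm]
        exact hpstep j i hin
  -- the concatenated sequence
  set z : ℕ → X := fun m =>
    B (Nat.findGreatest (fun j => o j ≤ m) m) (m - o (Nat.findGreatest (fun j => o j ≤ m) m))
    with hzdef
  have hoJ : ∀ m, o (Nat.findGreatest (fun j => o j ≤ m) m) ≤ m := by
    intro m
    exact Nat.findGreatest_spec (P := fun j => o j ≤ m) (Nat.zero_le m) (by omega)
  have hJlt : ∀ m, m < o (Nat.findGreatest (fun j => o j ≤ m) m + 1) := by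
    intro m
    by_contra hcon
    push_neg at hcon
    have h1 : Nat.findGreatest (fun j => o j ≤ m) m + 1 ≤ m := by
      have := hoj (Nat.findGreatest (fun j => o j ≤ m) m + 1)
      omega
    have h2 := Nat.le_findGreatest (P := fun j => o j ≤ m) h1 hcon
    omega
  have hJval : ∀ j i, i < L j → Nat.findGreatest (fun j' => o j' ≤ o j + i) (o j + i) = j := by
    intro j i hi
    rw [Nat.findGreatest_eq_iff]
    refine ⟨by have := hoj j; omega, fun _ => by omega, ?_⟩
    intro j' hj' hj'le hP
    have h1 : o (j+1) ≤ o j' := homono hj'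
    rw [hosucc] at h1
    omega
  have hzval : ∀ j i, i < L j → z (o j + i) = B j i := by
    intro j i hi
    simp only [hzdef]
    rw [hJval j i hi, Nat.add_sub_cancel_left]
  have hzval' : ∀ j i, i < L j → z (o j + i + 1) = B j (i+1) := by
    intro j i hi
    by_cases hcase : i + 1 < L j
    · have := hzval j (i+1) hcase
      rw [← this]
      ring_nf
    · have hiL : i + 1 = L j := by omega
      have e1 : o j + i + 1 = o (j+1) + 0 := by rw [hosucc]; omega
      rw [e1, hzval (j+1) 0 (by have := hL2 (j+1); omega), hiL, hBL j]
      exact hB0 (j+1)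
  have hzQC : QuasiCauchy z := by
    intro ε hε
    obtain ⟨j₀, hj₀⟩ := exists_nat_one_div_lt hε
    refine ⟨o j₀, ?_⟩
    intro m hm
    set j := Nat.findGreatest (fun j => o j ≤ m) m with hj
    have h1 : o j ≤ m := hoJ m
    have h2 : m < o (j+1) := hJlt m
    rw [hosucc] at h2
    have hi : m - o j < L j := by omega
    have hm' : m = o j + (m - o j) := by omega
    have hjj₀ : j₀ ≤ j := by
      refine Nat.le_findGreatest ?_ hm
      exact le_trans (hoj j₀) hm
    calc dist (z (m+1)) (z m)
        = dist (B j ((m - o j)+1)) (B j (m - o j)) := by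
          rw [show m + 1 = o j + (m - o j) + 1 by omega, show (z m) = z (o j + (m - o j)) by rw [← hm'],
            hzval' j _ hi, hzval j _ hi]
      _ < 1/(j+1) := hBstep j _ hi
      _ ≤ 1/(j₀+1) := by
          apply one_div_le_one_div_of_le (by positivity)
          have : (j₀:ℝ) ≤ j := Nat.cast_le.mpr hjj₀
          linarith
      _ < ε := hj₀
  -- but f ∘ z is not quasi-Cauchy
  obtain ⟨n₀, hn₀⟩ := hf z hzQC ε₀ hε₀
  have hm0 : o n₀ ≥ n₀ := hoj n₀
  have hz1 : z (o n₀) = a (K n₀) := by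
    have := hzval n₀ 0 (by have := hL2 n₀; omega)
    simpa [hB0] using this
  have hz2 : z (o n₀ + 1) = b (K n₀) := by
    have := hzval' n₀ 0 (by have := hL2 n₀; omega)
    simpa [hB1] using this
  have := hn₀ (o n₀) hm0
  simp only [Function.comp_apply] at this
  rw [hz1, hz2, dist_comm] at this
  exact absurd (hfab (K n₀)) (by linarith)

end Part4

theorem stmt11 {X : Type*} [MetricSpace X] :
    BourbakiQuasiPrecompact X ↔
      ((∀ f : X → ℝ, WardContinuous f → UniformContinuous f) ∧
        ∀ ε > (0:ℝ), {x : X | ε < degIsol x}.Finite) := by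
  constructor
  · intro hB
    exact ⟨fun f hf => uc_of_bqp hB f hf, fun ε hε => finite_isol_of_bqp hB hε⟩
  · rintro ⟨h1, h2⟩
    exact bqp_of_conditions h1 h2
end
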